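/- arXiv:2602.22988 — 2 statements merged into one kernel-verified Lean document; each statement's English description precedes it below -/
import Mathlib

section
/- Let A be a diagonalizable complex d×d matrix with A = V Λ V⁻¹, where Λ is diagonal with entries λ₁, …, λ_d, and suppose the spectral radius satisfies ρ(A) ≤ 1 + ε_u for some ε_u ≥ 0. Let κ(V) = ‖V‖₂ · ‖V⁻¹‖₂ and let M_{≈1}(A) = (1/d)·#{ j : 1 − ε_n ≤ |λ_j| ≤ 1 + ε_u } for some ε_n ∈ [0,1]. If x is a random vector in ℂ^d with E[x x*] = (1/d)·I, then ((1 − ε_n)² / κ(V)²) · M_{≈1}(A) ≤ E‖Ax‖₂² ≤ κ(V)² · (1 + ε_u)². -/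
/-!
For isotropic `x`, `E‖Ax‖² = ‖A‖_F² / d`, so both bounds are statements about the Frobenius
norm of `A`. Above, `‖A‖_F² ≤ d ‖A‖₂²` and `‖A‖₂ ≤ ‖V‖₂ ‖Λ‖₂ ‖V⁻¹‖₂ ≤ κ(V) ρ(A)`. Below,
`∑ |λⱼ|² = ‖V⁻¹ A V‖_F² ≤ κ(V)² ‖A‖_F²`, since multiplying by a matrix on either side scales the
Frobenius norm by at most its operator norm; every near-unit eigenvalue contributes at least
`(1 - ε_n)²` to `∑ |λⱼ|²`.
-/

open MeasureTheory Matrix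

/-- The operator norm of a complex matrix, induced by the Euclidean (`ℓ²`) norm. -/
noncomputable def l2OpNorm {d : ℕ} (A : Matrix (Fin d) (Fin d) ℂ) : ℝ :=
  ‖LinearMap.toContinuousLinearMap (Matrix.toEuclideanLin A)‖

open scoped Matrix.Norms.L2Operator ComplexConjugate

lemma sq_mul_card_filter_le_sum_sq {ι : Type*} [Fintype ι] (f : ι → ℝ) (p : ι → Prop)
    [DecidablePred p] {a : ℝ} (ha : 0 ≤ a) (hp : ∀ i, p i → a ≤ f i) :
    a ^ 2 * (Finset.univ.filter p).card ≤ ∑ i, f i ^ 2 := by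
  calc a ^ 2 * (Finset.univ.filter p).card = ∑ _i ∈ Finset.univ.filter p, a ^ 2 := by
        rw [Finset.sum_const, nsmul_eq_mul, mul_comm]
    _ ≤ ∑ i ∈ Finset.univ.filter p, f i ^ 2 := Finset.sum_le_sum fun i hi =>
        pow_le_pow_left₀ ha (hp i (Finset.mem_filter.mp hi).2) 2
    _ ≤ ∑ i, f i ^ 2 := Finset.sum_le_sum_of_subset_of_nonneg (Finset.subset_univ _)
        fun i _ _ => sq_nonneg _

namespace Matrix

variable {𝕜 : Type*} [RCLike 𝕜] {l m n : Type*} [Fintype l] [Fintype m] [Fintype n]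

noncomputable def frobeniusNormSq (A : Matrix m n 𝕜) : ℝ := ∑ i, ∑ j, ‖A i j‖ ^ 2

lemma frobeniusNormSq_nonneg (A : Matrix m n 𝕜) : 0 ≤ frobeniusNormSq A := by
  unfold frobeniusNormSq; positivity

lemma frobeniusNormSq_conjTranspose (A : Matrix m n 𝕜) :
    frobeniusNormSq Aᴴ = frobeniusNormSq A := by
  simp only [frobeniusNormSq, conjTranspose_apply, norm_star]
  exact Finset.sum_comm

lemma frobeniusNormSq_diagonal [DecidableEq n] (v : n → 𝕜) :
    frobeniusNormSq (diagonal v) = ∑ i, ‖v i‖ ^ 2 := by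
  simp [frobeniusNormSq, diagonal_apply, apply_ite]

lemma sum_norm_sq_mulVec_le [DecidableEq n] (A : Matrix m n 𝕜) (v : n → 𝕜) :
    ∑ i, ‖(A *ᵥ v) i‖ ^ 2 ≤ ‖A‖ ^ 2 * ∑ j, ‖v j‖ ^ 2 := by
  have h := pow_le_pow_left₀ (norm_nonneg _) (A.l2_opNorm_mulVec (WithLp.toLp 2 v)) 2
  simpa [mul_pow, EuclideanSpace.norm_sq_eq] using h

lemma frobeniusNormSq_mul_le_left [DecidableEq m] (A : Matrix l m 𝕜) (B : Matrix m n 𝕜) :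
    frobeniusNormSq (A * B) ≤ ‖A‖ ^ 2 * frobeniusNormSq B := by
  unfold frobeniusNormSq
  rw [Finset.sum_comm, Finset.sum_comm (f := fun i j => ‖B i j‖ ^ 2), Finset.mul_sum]
  exact Finset.sum_le_sum fun j _ => sum_norm_sq_mulVec_le A (fun k => B k j)

lemma frobeniusNormSq_mul_le_right [DecidableEq m] [DecidableEq n] (A : Matrix l m 𝕜)
    (B : Matrix m n 𝕜) :
    frobeniusNormSq (A * B) ≤ frobeniusNormSq A * ‖B‖ ^ 2 := by
  calc frobeniusNormSq (A * B) = frobeniusNormSq (Bᴴ * Aᴴ) := by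
        rw [← conjTranspose_mul, frobeniusNormSq_conjTranspose]
    _ ≤ ‖Bᴴ‖ ^ 2 * frobeniusNormSq Aᴴ := frobeniusNormSq_mul_le_left _ _
    _ = frobeniusNormSq A * ‖B‖ ^ 2 := by
        rw [l2_opNorm_conjTranspose, frobeniusNormSq_conjTranspose, mul_comm]

lemma frobeniusNormSq_le_card_mul_norm_sq [DecidableEq n] (A : Matrix m n 𝕜) :
    frobeniusNormSq A ≤ Fintype.card n * ‖A‖ ^ 2 := by
  calc frobeniusNormSq A = frobeniusNormSq (A * 1) := by rw [Matrix.mul_one]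
    _ ≤ ‖A‖ ^ 2 * frobeniusNormSq (1 : Matrix n n 𝕜) := frobeniusNormSq_mul_le_left _ _
    _ = (Fintype.card n : ℝ) * ‖A‖ ^ 2 := by
      rw [← diagonal_one, frobeniusNormSq_diagonal]; simp [mul_comm]

lemma norm_mul_diagonal_mul_le [DecidableEq n] (V W : Matrix n n 𝕜) (v : n → 𝕜) {c : ℝ}
    (hc : 0 ≤ c) (hv : ∀ i, ‖v i‖ ≤ c) : ‖V * diagonal v * W‖ ≤ ‖V‖ * ‖W‖ * c := by
  have hdiag : ‖(diagonal v : Matrix n n 𝕜)‖ ≤ c := by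
    rw [l2_opNorm_diagonal]; exact (pi_norm_le_iff_of_nonneg hc).mpr hv
  calc ‖V * diagonal v * W‖ ≤ ‖V‖ * ‖(diagonal v : Matrix n n 𝕜)‖ * ‖W‖ :=
        (l2_opNorm_mul _ _).trans (by gcongr; exact l2_opNorm_mul _ _)
    _ ≤ ‖V‖ * ‖W‖ * c := by
      rw [mul_right_comm]; gcongr

lemma sum_norm_sq_le_cond_sq_mul_frobeniusNormSq [DecidableEq n] {V : Matrix n n 𝕜}
    (hV : IsUnit V.det) (v : n → 𝕜) :
    ∑ i, ‖v i‖ ^ 2 ≤ (‖V‖ * ‖V⁻¹‖) ^ 2 * frobeniusNormSq (V * diagonal v * V⁻¹) := by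
  have hconj : V⁻¹ * (V * diagonal v * V⁻¹) * V = diagonal v := by
    simp [Matrix.mul_assoc, nonsing_inv_mul V hV, ← Matrix.mul_assoc V⁻¹ V]
  calc ∑ i, ‖v i‖ ^ 2 = frobeniusNormSq (V⁻¹ * (V * diagonal v * V⁻¹) * V) := by
        rw [hconj, frobeniusNormSq_diagonal]
    _ ≤ ‖V⁻¹‖ ^ 2 * frobeniusNormSq (V * diagonal v * V⁻¹) * ‖V‖ ^ 2 :=
        (frobeniusNormSq_mul_le_right _ _).trans <| by
          gcongr; exact frobeniusNormSq_mul_le_left _ _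
    _ = (‖V‖ * ‖V⁻¹‖) ^ 2 * frobeniusNormSq (V * diagonal v * V⁻¹) := by ring

lemma integral_sum_norm_sq_mulVec {ι Ω : Type*} [Fintype ι] [DecidableEq ι] [MeasurableSpace Ω]
    {μ : Measure Ω} {x : Ω → ι → ℂ}
    (hInt : ∀ i j, Integrable (fun ω => x ω i * conj (x ω j)) μ) {c : ℝ}
    (hIso : ∀ i j, ∫ ω, x ω i * conj (x ω j) ∂μ = if i = j then (c : ℂ) else 0)
    (A : Matrix m ι ℂ) :
    ∫ ω, ∑ i, ‖(A *ᵥ x ω) i‖ ^ 2 ∂μ = c * frobeniusNormSq A := by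
  have hexpand : ∀ ω i, ((‖(A *ᵥ x ω) i‖ ^ 2 : ℝ) : ℂ)
      = ∑ j, ∑ k, A i j * conj (A i k) * (x ω j * conj (x ω k)) := by
    intro ω i
    rw [Complex.ofReal_pow, ← Complex.mul_conj', mulVec, dotProduct, map_sum,
      Finset.sum_mul_sum]
    refine Finset.sum_congr rfl fun j _ => Finset.sum_congr rfl fun k _ => ?_
    simp only [map_mul]; ring
  have hrow : ∀ i, ∫ ω, ∑ j, ∑ k, A i j * conj (A i k) * (x ω j * conj (x ω k)) ∂μ
      = ∑ j, c * (‖A i j‖ : ℂ) ^ 2 := by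
    intro i
    rw [integral_finsetSum _ fun j _ => integrable_finsetSum _ fun k _ => (hInt j k).const_mul _]
    refine Finset.sum_congr rfl fun j _ => ?_
    rw [integral_finsetSum _ fun k _ => (hInt j k).const_mul _]
    simp_rw [integral_const_mul, hIso, mul_ite, mul_zero, Finset.sum_ite_eq, Finset.mem_univ,
      if_true, ← Complex.mul_conj']
    ring
  apply Complex.ofReal_injective
  rw [← integral_complex_ofReal]
  simp_rw [Complex.ofReal_sum, hexpand]
  rw [integral_finsetSum _ fun i _ => integrable_finsetSum _ fun j _ =>
    integrable_finsetSum _ fun k _ => (hInt j k).const_mul _]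
  simp only [hrow, frobeniusNormSq, Complex.ofReal_mul, Complex.ofReal_sum, Complex.ofReal_pow,
    Finset.mul_sum]

end Matrix

lemma l2OpNorm_eq_norm {d : ℕ} (A : Matrix (Fin d) (Fin d) ℂ) : l2OpNorm A = ‖A‖ := rfl

theorem near_unit_energy_preservation_diagonalizable_general
    {d : ℕ} {Ω : Type*} [MeasurableSpace Ω]
    (μ : Measure Ω)
    (x : Ω → Fin d → ℂ)
    (hInt : ∀ i j, Integrable (fun ω => x ω i * (starRingEnd ℂ) (x ω j)) μ)
    (hIso : ∀ i j, ∫ ω, x ω i * (starRingEnd ℂ) (x ω j) ∂μ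
      = if i = j then (1 / d : ℂ) else 0)
    (A V : Matrix (Fin d) (Fin d) ℂ) (lam : Fin d → ℂ)
    (hV : IsUnit V.det)
    (hA : A = V * Matrix.diagonal lam * V⁻¹)
    (εu εn : ℝ) (hεu : 0 ≤ εu) (hεn1 : εn ≤ 1)
    (hρ : ∀ j, ‖lam j‖ ≤ 1 + εu) :
    ((1 - εn) ^ 2 / (l2OpNorm V * l2OpNorm V⁻¹) ^ 2) *
        ((Finset.univ.filter fun j => 1 - εn ≤ ‖lam j‖ ∧ ‖lam j‖ ≤ 1 + εu).card / d : ℝ)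
      ≤ ∫ ω, ∑ i, ‖A.mulVec (x ω) i‖ ^ 2 ∂μ
    ∧ ∫ ω, ∑ i, ‖A.mulVec (x ω) i‖ ^ 2 ∂μ
      ≤ (l2OpNorm V * l2OpNorm V⁻¹) ^ 2 * (1 + εu) ^ 2 := by
  have hIsoReal : ∀ i j, ∫ ω, x ω i * (starRingEnd ℂ) (x ω j) ∂μ
      = if i = j then (((d : ℝ)⁻¹ : ℝ) : ℂ) else 0 := by
    simpa using hIso
  rw [Matrix.integral_sum_norm_sq_mulVec hInt hIsoReal, l2OpNorm_eq_norm, l2OpNorm_eq_norm]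
  constructor
  · have hF := Matrix.frobeniusNormSq_nonneg A
    have hmass := sq_mul_card_filter_le_sum_sq (fun j => ‖lam j‖)
      (fun j => 1 - εn ≤ ‖lam j‖ ∧ ‖lam j‖ ≤ 1 + εu) (sub_nonneg.mpr hεn1) fun _ h => h.1
    have hconj := Matrix.sum_norm_sq_le_cond_sq_mul_frobeniusNormSq hV lam
    rw [← hA] at hconj
    rw [div_mul_div_comm, ← div_div, inv_mul_eq_div]
    gcongr
    exact div_le_of_le_mul₀ (by positivity) hF (by linarith)
  · have hnorm := Matrix.norm_mul_diagonal_mul_le V V⁻¹ lam (by linarith) hρ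
    rw [← hA] at hnorm
    have hA2 := Matrix.frobeniusNormSq_le_card_mul_norm_sq A
    rw [Fintype.card_fin] at hA2
    rw [inv_mul_eq_div]
    refine div_le_of_le_mul₀ (Nat.cast_nonneg d) (by positivity) (hA2.trans ?_)
    rw [mul_comm, ← mul_pow]
    gcongr

/-- Let `A = V Λ V⁻¹` be a diagonalizable complex `d × d` matrix with
`Λ = diagonal λ`, spectral radius `ρ(A) ≤ 1 + ε_u` (i.e. `|λⱼ| ≤ 1 + ε_u` for all `j`),
`κ(V) = ‖V‖₂·‖V⁻¹‖₂`, near-unit mass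
`M_{≈1}(A) = (1/d)·#{j : 1 - ε_n ≤ |λⱼ| ≤ 1 + ε_u}` with `ε_n ∈ [0,1]`. If `x` is a
random vector in `ℂ^d` with `E[x x*] = (1/d)·I`, then
`((1 - ε_n)²/κ(V)²)·M_{≈1}(A) ≤ E‖Ax‖₂² ≤ κ(V)²·(1 + ε_u)²`. -/
theorem near_unit_energy_preservation_diagonalizable
    {d : ℕ} (hd : 0 < d) {Ω : Type*} [MeasurableSpace Ω]
    (μ : Measure Ω) [IsProbabilityMeasure μ]
    (x : Ω → Fin d → ℂ)
    (hInt : ∀ i j, Integrable (fun ω => x ω i * (starRingEnd ℂ) (x ω j)) μ)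
    (hIso : ∀ i j, ∫ ω, x ω i * (starRingEnd ℂ) (x ω j) ∂μ
      = if i = j then (1 / d : ℂ) else 0)
    (A V : Matrix (Fin d) (Fin d) ℂ) (lam : Fin d → ℂ)
    (hV : IsUnit V.det)
    (hA : A = V * Matrix.diagonal lam * V⁻¹)
    (εu εn : ℝ) (hεu : 0 ≤ εu) (hεn : 0 ≤ εn) (hεn1 : εn ≤ 1)
    (hρ : ∀ j, ‖lam j‖ ≤ 1 + εu) :
    ((1 - εn) ^ 2 / (l2OpNorm V * l2OpNorm V⁻¹) ^ 2) *
        ((Finset.univ.filter fun j => 1 - εn ≤ ‖lam j‖ ∧ ‖lam j‖ ≤ 1 + εu).card / d : ℝ)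
      ≤ ∫ ω, ∑ i, ‖A.mulVec (x ω) i‖ ^ 2 ∂μ
    ∧ ∫ ω, ∑ i, ‖A.mulVec (x ω) i‖ ^ 2 ∂μ
      ≤ (l2OpNorm V * l2OpNorm V⁻¹) ^ 2 * (1 + εu) ^ 2 :=
  near_unit_energy_preservation_diagonalizable_general μ x hInt hIso A V lam hV hA εu εn hεu hεn1 hρ
end

section
/- Let A and Â be real symmetric positive definite d×d matrices with smallest eigenvalue of A at least σ > 0, and suppose ‖Â − A‖₂ ≤ σ/2. Then ‖Â^{-1/2} − A^{-1/2}‖₂ ≤ (2/σ^{3/2}) · ‖Â − A‖₂. -/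
open Matrix

/-- The operator norm of a real matrix, induced by the Euclidean (`ℓ²`) norm. -/
noncomputable def l2OpNormR {d : ℕ} (A : Matrix (Fin d) (Fin d) ℝ) : ℝ :=
  ‖LinearMap.toContinuousLinearMap (Matrix.toEuclideanLin A)‖

/-- The square root of a positive semidefinite matrix, as `Matrix.PosSemidef.sqrt` was defined
in older Mathlib (it has since been removed). -/
noncomputable def Matrix.PosSemidef.sqrt {n 𝕜 : Type*} [Fintype n] [DecidableEq n] [RCLike 𝕜]
    [PartialOrder 𝕜] {A : Matrix n n 𝕜} (hA : A.PosSemidef) : Matrix n n 𝕜 :=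
  hA.1.eigenvectorUnitary.1 * diagonal ((↑) ∘ (√·) ∘ hA.1.eigenvalues) *
  (star hA.1.eigenvectorUnitary : Matrix n n 𝕜)

/-!
Write `S = A^{1/2}` and `T = Â^{1/2}`. Spectral lower bounds propagate through the functional
calculus: `A ≥ σ`, hence `Â ≥ σ - ‖Â - A‖ ≥ σ/2` (Weyl), `S ≥ √σ`, `T ≥ √(σ/2)`, and
`‖S⁻¹‖ ≤ 1/√σ`, `‖T⁻¹‖ ≤ 1/√(σ/2)`. The difference `X = T - S` solves the Sylvester equation
`T X + X S = Â - A`; testing it against a unit eigenvector of `X` for an eigenvalue of modulus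
`‖X‖` gives `‖X‖ (√σ + √(σ/2)) ≤ ‖Â - A‖`. Finally `T⁻¹ - S⁻¹ = T⁻¹ (S - T) S⁻¹`.
-/

open scoped Matrix.Norms.L2Operator MatrixOrder RealInnerProductSpace

section ContinuousFunctionalCalculus

variable {A : Type*} [Ring A] [StarRing A] [TopologicalSpace A] [Algebra ℝ A]
  [ContinuousFunctionalCalculus ℝ A IsSelfAdjoint] [PartialOrder A] [StarOrderedRing A]
  [NonnegSpectrumClass ℝ A]

lemma algebraMap_sqrt_le_cfc_sqrt {a : A} (ha : IsSelfAdjoint a) {r : ℝ}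
    (h : algebraMap ℝ A r ≤ a) : algebraMap ℝ A √r ≤ cfc Real.sqrt a :=
  algebraMap_le_cfc _ _ a fun x hx ↦
    Real.sqrt_le_sqrt ((algebraMap_le_iff_le_spectrum ha).1 h x hx)

lemma isUnit_of_algebraMap_le {a : A} (ha : IsSelfAdjoint a) {r : ℝ} (hr : 0 < r)
    (h : algebraMap ℝ A r ≤ a) : IsUnit a :=
  (spectrum.zero_notMem_iff ℝ).1 fun h0 ↦
    ((algebraMap_le_iff_le_spectrum ha).1 h 0 h0).not_gt hr

lemma cfc_sqrt_mul_self {a : A} (ha : 0 ≤ a) : cfc Real.sqrt a * cfc Real.sqrt a = a := by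
  rw [← cfc_mul Real.sqrt Real.sqrt a]
  conv_rhs => rw [← cfc_id' ℝ a]
  exact cfc_congr fun x hx ↦ Real.mul_self_sqrt (spectrum_nonneg_of_nonneg ha hx)

end ContinuousFunctionalCalculus

section IsometricContinuousFunctionalCalculus

variable {A : Type*} [NormedRing A] [StarRing A] [NormedAlgebra ℝ A]
  [IsometricContinuousFunctionalCalculus ℝ A IsSelfAdjoint] [PartialOrder A] [StarOrderedRing A]

open IsometricContinuousFunctionalCalculus in
lemma IsSelfAdjoint.algebraMap_neg_norm_le {a : A} (ha : IsSelfAdjoint a) :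
    algebraMap ℝ A (-‖a‖) ≤ a :=
  algebraMap_le_of_le_spectrum fun x hx ↦ neg_le_of_abs_le (norm_spectrum_le a hx)

lemma algebraMap_sub_norm_sub_le {a b : A} (hab : IsSelfAdjoint (b - a)) {r : ℝ}
    (h : algebraMap ℝ A r ≤ a) : algebraMap ℝ A (r - ‖b - a‖) ≤ b := by
  simpa [sub_eq_add_neg] using add_le_add h hab.algebraMap_neg_norm_le

lemma norm_ringInverse_le_of_algebraMap_le [NonnegSpectrumClass ℝ A] {a : A}
    (ha : IsSelfAdjoint a) {r : ℝ} (hr : 0 < r) (h : algebraMap ℝ A r ≤ a) :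
    ‖Ring.inverse a‖ ≤ r⁻¹ := by
  have hspec : ∀ x ∈ spectrum ℝ a, r ≤ x := (algebraMap_le_iff_le_spectrum ha).1 h
  rw [← cfc_ringInverse_id (R := ℝ) a (isUnit_of_algebraMap_le ha hr h)]
  refine norm_cfc_le (inv_nonneg.2 hr.le) fun x hx ↦ ?_
  rw [Real.norm_eq_abs, abs_inv, abs_of_pos (hr.trans_le (hspec x hx))]
  exact inv_anti₀ hr (hspec x hx)

end IsometricContinuousFunctionalCalculus

namespace Matrix

lemma PosSemidef.sqrt_eq_cfc_sqrt {n 𝕜 : Type*} [Fintype n] [DecidableEq n] [RCLike 𝕜]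
    [PartialOrder 𝕜] {A : Matrix n n 𝕜} (hA : A.PosSemidef) : hA.sqrt = cfc Real.sqrt A := by
  rw [hA.1.cfc_eq, IsHermitian.cfc, Unitary.conjStarAlgAut_apply]
  rfl

lemma IsHermitian.algebraMap_le_of_le_eigenvalues {n 𝕜 : Type*} [Fintype n] [DecidableEq n]
    [RCLike 𝕜] {A : Matrix n n 𝕜} (hA : A.IsHermitian) {r : ℝ} (h : ∀ i, r ≤ hA.eigenvalues i) :
    algebraMap ℝ _ r ≤ A :=
  algebraMap_le_of_le_spectrum <| hA.spectrum_real_eq_range_eigenvalues ▸ Set.forall_mem_range.2 h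

variable {n : Type*} [Fintype n] [DecidableEq n]

lemma inner_toEuclideanCLM_le_of_le {M N : Matrix n n ℝ} (h : M ≤ N) (v : EuclideanSpace ℝ n) :
    ⟪v, toEuclideanCLM (𝕜 := ℝ) M v⟫ ≤ ⟪v, toEuclideanCLM (𝕜 := ℝ) N v⟫ := by
  have := (isPositive_toEuclideanLin_iff.2 (le_iff.1 h)).inner_nonneg_right v
  rwa [map_sub, LinearMap.sub_apply, inner_sub_right, sub_nonneg] at this

lemma le_inner_toEuclideanCLM_of_algebraMap_le {M : Matrix n n ℝ} {r : ℝ}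
    (h : algebraMap ℝ _ r ≤ M) {v : EuclideanSpace ℝ n} (hv : ‖v‖ = 1) :
    r ≤ ⟪v, toEuclideanCLM (𝕜 := ℝ) M v⟫ := by
  simpa [Algebra.algebraMap_eq_smul_one, real_inner_smul_right, real_inner_self_eq_norm_sq, hv]
    using inner_toEuclideanCLM_le_of_le h v

lemma abs_inner_toEuclideanCLM_le (M : Matrix n n ℝ) {v : EuclideanSpace ℝ n} (hv : ‖v‖ = 1) :
    |⟪v, toEuclideanCLM (𝕜 := ℝ) M v⟫| ≤ ‖M‖ := by
  simpa [ContinuousLinearMap.rayleighQuotient, ContinuousLinearMap.reApplyInnerSelf_apply, hv,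
    real_inner_comm, l2_opNorm_toEuclideanCLM] using
    (toEuclideanCLM (𝕜 := ℝ) M).rayleighQuotient_le_norm v

lemma norm_sub_mul_le_norm_mul_self_sub {S T : Matrix n n ℝ} (hS : IsSelfAdjoint S)
    (hT : IsSelfAdjoint T) {a b : ℝ} (ha : algebraMap ℝ _ a ≤ S) (hb : algebraMap ℝ _ b ≤ T) :
    ‖T - S‖ * (a + b) ≤ ‖T * T - S * S‖ := by
  rcases isEmpty_or_nonempty n with hn | hn
  · simp [Subsingleton.elim (T - S) 0]
  set X := T - S
  have hX : X.IsHermitian := hT.sub hS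
  obtain ⟨μ, hμ, hμX : ‖μ‖ = ‖X‖⟩ :=
    (IsometricContinuousFunctionalCalculus.isGreatest_norm_spectrum (𝕜 := ℝ) X hX.isSelfAdjoint).1
  obtain ⟨i, rfl⟩ : μ ∈ Set.range hX.eigenvalues := hX.spectrum_real_eq_range_eigenvalues ▸ hμ
  set v := hX.eigenvectorBasis i
  have hv : ‖v‖ = 1 := hX.eigenvectorBasis.orthonormal.1 i
  have hXv : toEuclideanCLM (𝕜 := ℝ) X v = hX.eigenvalues i • v := by
    ext1
    simp [v, hX.mulVec_eigenvectorBasis]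
  have hXsymm (x y : EuclideanSpace ℝ n) :
      ⟪toEuclideanCLM (𝕜 := ℝ) X x, y⟫ = ⟪x, toEuclideanCLM (𝕜 := ℝ) X y⟫ :=
    isSymmetric_toEuclideanLin_iff.2 hX x y
  have hsylvester : ⟪v, toEuclideanCLM (𝕜 := ℝ) (T * T - S * S) v⟫ =
      hX.eigenvalues i * (⟪v, toEuclideanCLM (𝕜 := ℝ) T v⟫ + ⟪v, toEuclideanCLM (𝕜 := ℝ) S v⟫) := by
    rw [show T * T - S * S = T * X + X * S by simp only [X]; noncomm_ring, map_add, map_mul,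
      map_mul, _root_.add_apply, mul_apply_eq_comp, mul_apply_eq_comp, inner_add_right, hXv,
      map_smul, real_inner_smul_right, ← hXsymm, hXv, real_inner_smul_left]
    ring
  have hsum : a + b ≤ ⟪v, toEuclideanCLM (𝕜 := ℝ) T v⟫ + ⟪v, toEuclideanCLM (𝕜 := ℝ) S v⟫ := by
    linarith [le_inner_toEuclideanCLM_of_algebraMap_le ha hv,
      le_inner_toEuclideanCLM_of_algebraMap_le hb hv]
  calc ‖X‖ * (a + b)
      ≤ |hX.eigenvalues i| *
          |⟪v, toEuclideanCLM (𝕜 := ℝ) T v⟫ + ⟪v, toEuclideanCLM (𝕜 := ℝ) S v⟫| := by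
        rw [← hμX, Real.norm_eq_abs]
        exact mul_le_mul_of_nonneg_left (hsum.trans (le_abs_self _)) (abs_nonneg _)
    _ = |⟪v, toEuclideanCLM (𝕜 := ℝ) (T * T - S * S) v⟫| := by rw [hsylvester, abs_mul]
    _ ≤ ‖T * T - S * S‖ := abs_inner_toEuclideanCLM_le _ hv

lemma norm_inv_sub_inv_mul_le {S T : Matrix n n ℝ} (hS : IsSelfAdjoint S) (hT : IsSelfAdjoint T)
    {s t : ℝ} (hs : 0 < s) (ht : 0 < t) (hSs : algebraMap ℝ _ s ≤ S)
    (hTt : algebraMap ℝ _ t ≤ T) : ‖T⁻¹ - S⁻¹‖ * (s * t * (s + t)) ≤ ‖T * T - S * S‖ := by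
  rw [nonsing_inv_eq_ringInverse, nonsing_inv_eq_ringInverse,
    Ring.inverse_sub_inverse (iff_of_true (isUnit_of_algebraMap_le hT ht hTt)
      (isUnit_of_algebraMap_le hS hs hSs))]
  calc ‖Ring.inverse T * (S - T) * Ring.inverse S‖ * (s * t * (s + t))
      ≤ t⁻¹ * ‖T - S‖ * s⁻¹ * (s * t * (s + t)) := by
        rw [norm_sub_rev]
        gcongr
        refine norm_mul₃_le.trans ?_
        gcongr
        · exact norm_ringInverse_le_of_algebraMap_le hT ht hTt
        · exact norm_ringInverse_le_of_algebraMap_le hS hs hSs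
    _ = ‖T - S‖ * (s + t) := by field_simp
    _ ≤ ‖T * T - S * S‖ := norm_sub_mul_le_norm_mul_self_sub hS hT hSs hTt

end Matrix

lemma rpow_three_halves_le {σ : ℝ} (hσ : 0 < σ) :
    σ ^ ((3 : ℝ) / 2) ≤ 2 * (√σ * √(σ / 2) * (√σ + √(σ / 2))) := by
  set s := √σ
  set t := √(σ / 2)
  have hs : 0 ≤ s := Real.sqrt_nonneg σ
  have ht : 0 ≤ t := Real.sqrt_nonneg (σ / 2)
  have hsσ : s * s = σ := Real.mul_self_sqrt hσ.le
  have hts : s / 2 ≤ t := by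
    rw [Real.le_sqrt (by positivity) (by positivity), div_pow, sq, hsσ]
    linarith
  rw [show (3 : ℝ) / 2 = 1 + 1 / 2 by norm_num, Real.rpow_add hσ, Real.rpow_one,
    ← Real.sqrt_eq_rpow]
  change σ * s ≤ _
  nlinarith [mul_le_mul_of_nonneg_left hts (mul_nonneg hs hs), mul_nonneg hs (mul_nonneg ht ht)]

lemma l2OpNormR_eq_norm {d : ℕ} (M : Matrix (Fin d) (Fin d) ℝ) : l2OpNormR M = ‖M‖ := rfl

/-- **perturbation of inverse square roots.** Let `A` and `Â` be real
symmetric positive definite `d × d` matrices with every eigenvalue of `A` at least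
`σ > 0`, and suppose `‖Â − A‖₂ ≤ σ/2`. Then, writing `M^{-1/2}` for the inverse of the
unique (symmetric) positive semidefinite square root of `M`,
`‖Â^{-1/2} − A^{-1/2}‖₂ ≤ (2/σ^{3/2})·‖Â − A‖₂`. -/
theorem inverse_sqrt_perturbation_bound
    {d : ℕ} (A Ahat : Matrix (Fin d) (Fin d) ℝ)
    (hA : A.PosDef) (hAhat : Ahat.PosDef)
    (σ : ℝ) (hσ : 0 < σ)
    (heig : ∀ i, σ ≤ hA.1.eigenvalues i)
    (hpert : l2OpNormR (Ahat - A) ≤ σ / 2) :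
    l2OpNormR (hAhat.posSemidef.sqrt⁻¹ - hA.posSemidef.sqrt⁻¹)
      ≤ (2 / σ ^ ((3 : ℝ) / 2)) * l2OpNormR (Ahat - A) := by
  simp only [l2OpNormR_eq_norm] at hpert ⊢
  rw [hAhat.posSemidef.sqrt_eq_cfc_sqrt, hA.posSemidef.sqrt_eq_cfc_sqrt]
  have hA_ge : algebraMap ℝ _ σ ≤ A := hA.1.algebraMap_le_of_le_eigenvalues heig
  have hAhat_ge : algebraMap ℝ _ (σ / 2) ≤ Ahat :=
    (algebraMap_mono _ (by linarith : σ / 2 ≤ σ - ‖Ahat - A‖)).trans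
      (algebraMap_sub_norm_sub_le (hAhat.1.sub hA.1).isSelfAdjoint hA_ge)
  have hinv := Matrix.norm_inv_sub_inv_mul_le (cfc_predicate _ A) (cfc_predicate _ Ahat)
    (Real.sqrt_pos.2 hσ) (Real.sqrt_pos.2 (half_pos hσ))
    (algebraMap_sqrt_le_cfc_sqrt hA.1.isSelfAdjoint hA_ge)
    (algebraMap_sqrt_le_cfc_sqrt hAhat.1.isSelfAdjoint hAhat_ge)
  rw [cfc_sqrt_mul_self (Matrix.nonneg_iff_posSemidef.2 hA.posSemidef),
    cfc_sqrt_mul_self (Matrix.nonneg_iff_posSemidef.2 hAhat.posSemidef)] at hinv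
  have hden := rpow_three_halves_le hσ
  rw [div_mul_eq_mul_div, le_div_iff₀ (by positivity)]
  calc _ ≤ ‖(cfc Real.sqrt Ahat)⁻¹ - (cfc Real.sqrt A)⁻¹‖ *
        (2 * (√σ * √(σ / 2) * (√σ + √(σ / 2)))) := by gcongr
    _ ≤ 2 * ‖Ahat - A‖ := by linarith
end
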